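/- arXiv:1607.08272 — 3 statements merged into one kernel-verified Lean document; each statement's English description precedes it below -/
import Mathlib

section
/- Let α be algebraic of degree d over ℚ, let r ∈ ℤ, let p be a prime not dividing the leading coefficient a_d of the minimal polynomial f of α over ℤ, and suppose p divides f(r). Then there is a conjugate α' of α and an absolute value |·| on ℚ(α') extending the p-adic absolute value such that |α' - r| < 1. -/
/-!
Embedding `A` over `ℚ` into the algebraic closure of `ℚ_[p]` and pulling back its norm gives an
absolute value on `A` extending `|·|_p`. Over `A` we have `f(r) = a_d ∏ (r - α')`, the product
running over the roots `α'` of `f`; as `|a_d|_p = 1` and `|f(r)|_p < 1`, one factor is `< 1`.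
-/

open Polynomial

theorem AbsoluteValue.exists_mem_roots_sub_lt_one {K : Type*} [Field K] (v : AbsoluteValue K ℝ)
    {F : K[X]} (hF : F.Splits) (x : K) (h : v (F.eval x) < v F.leadingCoeff) :
    ∃ a ∈ F.roots, v (x - a) < 1 := by
  by_contra! hge
  have : 1 ≤ v (F.roots.map (x - ·)).prod := by
    rw [map_multiset_prod, Multiset.map_map]
    exact Multiset.one_le_prod_map hge
  rw [hF.eval_eq_prod_roots, map_mul] at h
  nlinarith [v.nonneg F.leadingCoeff]

theorem exists_absoluteValue_extends_padicNorm (K : Type*) [Field K] [Algebra ℚ K]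
    [Algebra.IsAlgebraic ℚ K] (p : ℕ) [Fact p.Prime] :
    ∃ v : AbsoluteValue K ℝ, ∀ q : ℚ, v (algebraMap ℚ K q) = padicNorm p q := by
  let ι : K →ₐ[ℚ] PadicAlgCl p := IsAlgClosed.lift
  refine ⟨(NormedField.toAbsoluteValue (PadicAlgCl p)).comp ι.toRingHom.injective, fun q => ?_⟩
  change ‖ι (algebraMap ℚ K q)‖ = _
  rw [ι.commutes, eq_ratCast, ← map_ratCast (algebraMap ℚ_[p] (PadicAlgCl p)),
    PadicAlgCl.norm_extends, Padic.eq_padicNorm]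

theorem exists_conjugate_close_to_r_general (A : Type*) [Field A] [Algebra ℚ A]
    [IsAlgClosure ℚ A] (f : Polynomial ℤ) (r : ℤ) (p : ℕ) (hp : p.Prime)
    (hlead : ¬ (p : ℤ) ∣ f.leadingCoeff) (hfr : (p : ℤ) ∣ f.eval r) :
    ∃ (α' : A) (v : AbsoluteValue A ℝ),
      Polynomial.aeval α' f = 0 ∧
      (∀ q : ℚ, v (algebraMap ℚ A q) = (padicNorm p q : ℝ)) ∧
      v (α' - algebraMap ℚ A (r : ℚ)) < 1 := by
  have : Fact p.Prime := ⟨hp⟩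
  have : IsAlgClosed A := IsAlgClosure.isAlgClosed ℚ
  have : CharZero A := charZero_of_injective_algebraMap (algebraMap ℚ A).injective
  obtain ⟨v, hv⟩ := exists_absoluteValue_extends_padicNorm A p
  have hv_int (n : ℤ) : v (n : A) = padicNorm p n := by simpa using hv n
  set F := f.map (algebraMap ℤ A)
  have hF_lead : v F.leadingCoeff = 1 := by
    rw [leadingCoeff_map_of_injective (algebraMap ℤ A).injective_int, eq_intCast, hv_int]
    exact_mod_cast (padicNorm.int_eq_one_iff _).mpr hlead
  have hF_eval : v (F.eval (r : A)) < 1 := by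
    rw [eval_intCast_map, eq_intCast, hv_int]
    exact_mod_cast (padicNorm.int_lt_one_iff _).mpr hfr
  obtain ⟨a, ha, hlt⟩ :=
    v.exists_mem_roots_sub_lt_one (IsAlgClosed.splits F) r (hF_lead ▸ hF_eval)
  refine ⟨a, v, (mem_aroots.mp ha).2, hv, ?_⟩
  rwa [map_intCast, v.map_sub]

/-- Let `α` be algebraic of degree `d` over `ℚ`, with primitive integer minimal
polynomial `f` of leading coefficient `a_d`, let `r ∈ ℤ`, and let `p` be a prime with
`p ∤ a_d` and `p ∣ f(r)`.  Then there is a conjugate `α'` of `α` (a root of `f` in `ℚ̄`)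
and an absolute value on `ℚ̄` extending the `p`-adic absolute value such that
`|α' - r| < 1`. -/
theorem exists_conjugate_close_to_r (A : Type*) [Field A] [Algebra ℚ A]
    [IsAlgClosure ℚ A] (d : ℕ) (hd : 1 ≤ d) (α : A)
    (f : Polynomial ℤ) (hdeg : f.natDegree = d) (hirr : Irreducible f)
    (hroot : Polynomial.aeval α f = 0) (r : ℤ) (p : ℕ) (hp : p.Prime)
    (hlead : ¬ (p : ℤ) ∣ f.leadingCoeff) (hfr : (p : ℤ) ∣ f.eval r) :
    ∃ (α' : A) (v : AbsoluteValue A ℝ),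
      Polynomial.aeval α' f = 0 ∧
      (∀ q : ℚ, v (algebraMap ℚ A q) = (padicNorm p q : ℝ)) ∧
      v (α' - algebraMap ℚ A (r : ℚ)) < 1 :=
  exists_conjugate_close_to_r_general A f r p hp hlead hfr
end

section
/- Let φ(z) ∈ ℂ(z) be a rational map of degree r ≥ 2 such that ∞ is not a periodic point of φ. Then for all n ≥ 2, the n-th iterate φⁿ has at least r^{n-2} distinct poles. -/
/-!
Write `φ = u/v` with `r = max (deg u) (deg v)`. For `Q = α` the finite points of `φ⁻¹(Q)` are
the roots of `u - αv` (of `v` for `Q = ∞`), a polynomial of degree `r` unless `Q = φ(∞)`. The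
repeated roots of these polynomials are accounted for by `divRadical`, and for distinct `Q` these
are coprime divisors of the Wronskian `uv' - u'v`, which has degree `≤ 2r - 2`. This is the
Riemann–Hurwitz bound: the deficiencies `r - #φ⁻¹(Q)` add up to at most `2r - 2` over all `Q`.

Since `∞` is not periodic, the levels `φ⁻ᵏ(∞)` are pairwise disjoint, so their total deficiencies
`d_k` satisfy `∑ d_k ≤ 2r - 2`, while `a_k = #φ⁻ᵏ(∞)` satisfies
`a_{k+1} ≥ max (a_k, r a_k - d_k) ≥ a_k max (1, r - d_k)`. The concavity inequality
`r ^ (m - 1) ≤ m ^ (r - 1)` for `1 ≤ m ≤ r` turns this into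
`r ^ ((r - 1) k) ≤ a_k ^ (r - 1) * r ^ (d_0 + ⋯ + d_{k-1})`, whence `a_n ≥ r ^ (n - 2)`.
-/

open Polynomial OnePoint Filter
open scoped Classical

/-- The self-map of `ℙ¹(F) = F ∪ {∞}` induced by the rational function `u/v`. -/
noncomputable def ratMap {F : Type*} [Field F] (u v : Polynomial F) :
    OnePoint F → OnePoint F :=
  fun P =>
    Option.rec
      (if v.natDegree < u.natDegree then (∞ : OnePoint F)
       else if u.natDegree < v.natDegree then ((0 : F) : OnePoint F)
       else ((u.leadingCoeff / v.leadingCoeff : F) : OnePoint F))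
      (fun z => if v.eval z = 0 then (∞ : OnePoint F)
                else ((u.eval z / v.eval z : F) : OnePoint F))
      P

open UniqueFactorizationMonoid
open EuclideanDomain (divRadical divRadical_ne_zero radical_mul_divRadical)

theorem add_one_pow_mul_sub_le_pow_succ {x t : ℕ} (h : t ≤ x) :
    (x + 1) ^ t * (x - t) ≤ x ^ (t + 1) := by
  induction t with
  | zero => simp
  | succ t ih =>
    have hstep : (x + 1) * (x - (t + 1)) ≤ x * (x - t) := by
      obtain ⟨y, rfl⟩ := Nat.exists_eq_add_of_le h
      simp only [show t + 1 + y - (t + 1) = y by omega, show t + 1 + y - t = y + 1 by omega]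
      nlinarith
    calc (x + 1) ^ (t + 1) * (x - (t + 1)) = (x + 1) ^ t * ((x + 1) * (x - (t + 1))) := by ring
      _ ≤ (x + 1) ^ t * (x * (x - t)) := Nat.mul_le_mul_left _ hstep
      _ = x * ((x + 1) ^ t * (x - t)) := by ring
      _ ≤ x * x ^ (t + 1) := Nat.mul_le_mul_left _ (ih (by omega))
      _ = x ^ (t + 1 + 1) := by ring

theorem pow_sub_one_le_pow_sub_one {m r : ℕ} (hm : 1 ≤ m) (hmr : m ≤ r) :
    r ^ (m - 1) ≤ m ^ (r - 1) := by
  induction r, hmr using Nat.le_induction with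
  | base => rfl
  | succ r hmr ih =>
    have hbern := add_one_pow_mul_sub_le_pow_succ (x := r) (t := m - 1) (by omega)
    rw [Nat.sub_add_cancel hm] at hbern
    have hr : r ≤ m * (r - (m - 1)) := by
      obtain ⟨k, rfl⟩ := Nat.exists_eq_add_of_le hmr
      obtain ⟨j, rfl⟩ := Nat.exists_eq_add_of_le hm
      simp only [show 1 + j + k - (1 + j - 1) = k + 1 by omega]
      nlinarith
    have hkey : (r + 1) ^ (m - 1) * (r - (m - 1)) ≤ m * r ^ (m - 1) * (r - (m - 1)) :=
      calc (r + 1) ^ (m - 1) * (r - (m - 1)) ≤ r ^ m := hbern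
        _ = r * r ^ (m - 1) := by rw [← pow_succ', Nat.sub_add_cancel hm]
        _ ≤ m * (r - (m - 1)) * r ^ (m - 1) := Nat.mul_le_mul_right _ hr
        _ = m * r ^ (m - 1) * (r - (m - 1)) := by ring
    calc (r + 1) ^ (m - 1) ≤ m * r ^ (m - 1) := Nat.le_of_mul_le_mul_right hkey (by omega)
      _ ≤ m * m ^ (r - 1) := Nat.mul_le_mul_left _ ih
      _ = m ^ (r + 1 - 1) := by rw [← pow_succ']; congr 1; omega

theorem pow_le_max_one_sub_pow_mul_pow {r : ℕ} (hr : 0 < r) (d : ℕ) :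
    r ^ (r - 1) ≤ max 1 (r - d) ^ (r - 1) * r ^ d := by
  rcases le_or_gt (r - 1) d with hd | hd
  · calc r ^ (r - 1) ≤ 1 * r ^ d := by
          rw [one_mul]; exact Nat.pow_le_pow_right (by omega) hd
      _ ≤ _ := Nat.mul_le_mul_right _ (Nat.one_le_pow _ _ (by omega))
  · calc r ^ (r - 1) = r ^ (r - d - 1) * r ^ d := by rw [← pow_add]; congr 1; omega
      _ ≤ (r - d) ^ (r - 1) * r ^ d :=
          Nat.mul_le_mul_right _ (pow_sub_one_le_pow_sub_one (by omega) (by omega))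
      _ ≤ _ := Nat.mul_le_mul_right _ (Nat.pow_le_pow_left (le_max_right _ _) _)

open Finset in
theorem pow_sub_le_of_mul_le_add_of_sum_le {a d : ℕ → ℕ} {r c n : ℕ} (ha₀ : 1 ≤ a 0)
    (hmono : Monotone a) (hstep : ∀ k, r * a k ≤ a (k + 1) + d k)
    (hsum : ∑ k ∈ range n, d k ≤ c * (r - 1)) : r ^ (n - c) ≤ a n := by
  have hpos : ∀ k, 1 ≤ a k := fun k => ha₀.trans (hmono k.zero_le)
  rcases lt_or_ge r 2 with hr | hr
  · exact (pow_le_one₀ (Nat.zero_le r) (by omega)).trans (hpos n)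
  rcases le_or_gt n c with hnc | hnc
  · simpa [Nat.sub_eq_zero_of_le hnc] using hpos n
  have hgrow : ∀ k, a k * max 1 (r - d k) ≤ a (k + 1) := by
    intro k
    rcases le_or_gt r (d k) with hd | hd
    · simpa [Nat.sub_eq_zero_of_le hd] using hmono k.le_succ
    · rw [max_eq_right (by omega)]
      have := hstep k
      have := Nat.mul_le_mul_right (d k) (hpos k)
      rw [Nat.mul_sub, mul_comm (a k) r]
      omega
  have hinv : ∀ m, r ^ ((r - 1) * m) ≤ a m ^ (r - 1) * r ^ (∑ k ∈ range m, d k) := by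
    intro m
    induction m with
    | zero => simpa using Nat.one_le_pow _ _ (hpos 0)
    | succ m ih =>
      calc r ^ ((r - 1) * (m + 1)) = r ^ ((r - 1) * m) * r ^ (r - 1) := by ring
        _ ≤ (a m ^ (r - 1) * r ^ (∑ k ∈ range m, d k)) * (max 1 (r - d m) ^ (r - 1) * r ^ d m) :=
            Nat.mul_le_mul ih (pow_le_max_one_sub_pow_mul_pow (by omega) (d m))
        _ = (a m * max 1 (r - d m)) ^ (r - 1) * r ^ (∑ k ∈ range (m + 1), d k) := by
            rw [sum_range_succ]; ring
        _ ≤ a (m + 1) ^ (r - 1) * r ^ (∑ k ∈ range (m + 1), d k) := by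
            gcongr; exact hgrow m
  refine (Nat.pow_le_pow_iff_left (by omega : r - 1 ≠ 0)).mp
    (Nat.le_of_mul_le_mul_right (c := r ^ (c * (r - 1))) ?_ (by positivity))
  calc (r ^ (n - c)) ^ (r - 1) * r ^ (c * (r - 1)) = r ^ ((r - 1) * n) := by
        rw [← pow_mul, ← pow_add]; congr 1
        rw [← Nat.add_mul, Nat.sub_add_cancel hnc.le, mul_comm]
    _ ≤ a n ^ (r - 1) * r ^ (∑ k ∈ range n, d k) := hinv n
    _ ≤ a n ^ (r - 1) * r ^ (c * (r - 1)) := by gcongr; omega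

theorem Set.ncard_preimage_finset_eq_sum {α β : Type*} {f : α → β} (s : Finset β)
    (hfin : ∀ y ∈ s, (f ⁻¹' {y}).Finite) :
    (f ⁻¹' ↑s).ncard = ∑ y ∈ s, (f ⁻¹' {y}).ncard := by
  rw [← Set.biUnion_preimage_singleton, s.finite_toSet.ncard_biUnion hfin
    (Set.pairwiseDisjoint_fiber f _), finsum_mem_coe_finset]

theorem Function.disjoint_preimage_iterate_singleton {α : Type*} {f : α → α} {x : α}
    (hper : ∀ m, 1 ≤ m → f^[m] x ≠ x) {j k : ℕ} (hjk : j ≠ k) :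
    Disjoint (f^[j] ⁻¹' {x}) (f^[k] ⁻¹' {x}) := by
  wlog hlt : j < k generalizing j k
  · exact (this hjk.symm (by omega)).symm
  refine Set.disjoint_left.mpr fun P (hj : f^[j] P = x) (hk : f^[k] P = x) =>
    hper (k - j) (by omega) ?_
  calc f^[k - j] x = f^[k - j + j] P := by rw [Function.iterate_add_apply, hj]
    _ = x := by rwa [Nat.sub_add_cancel hlt.le]

open Finset in
theorem pow_sub_le_ncard_preimage_iterate {α : Type*} {f : α → α} {x : α} {r c : ℕ}
    (hfin : ∀ y, (f ⁻¹' {y}).Finite) (hsurj : f.Surjective)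
    (hdef : ∀ s : Finset α, ∑ y ∈ s, (r - (f ⁻¹' {y}).ncard) ≤ c * (r - 1))
    (hper : ∀ m, 1 ≤ m → f^[m] x ≠ x) (n : ℕ) :
    r ^ (n - c) ≤ (f^[n] ⁻¹' {x}).ncard := by
  have hsucc : ∀ k, f^[k + 1] ⁻¹' {x} = f ⁻¹' (f^[k] ⁻¹' {x}) := fun k => by
    rw [Function.iterate_succ, Set.preimage_comp]
  have hfinL : ∀ k, (f^[k] ⁻¹' {x}).Finite := by
    intro k
    induction k with
    | zero => exact Set.finite_singleton x
    | succ k ih => rw [hsucc]; exact ih.preimage' fun y _ => hfin y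
  set T : ℕ → Finset α := fun k => (hfinL k).toFinset
  have hT : ∀ k, (f^[k] ⁻¹' {x} : Set α) = T k := fun k => (hfinL k).coe_toFinset.symm
  have hcard : ∀ k, (f^[k + 1] ⁻¹' {x}).ncard = ∑ y ∈ T k, (f ⁻¹' {y}).ncard := fun k => by
    rw [hsucc, hT, Set.ncard_preimage_finset_eq_sum _ fun y _ => hfin y]
  have hfiber : ∀ y, 1 ≤ (f ⁻¹' {y}).ncard := fun y =>
    (Set.ncard_pos (hfin y)).mpr ⟨_, (hsurj y).choose_spec⟩
  refine pow_sub_le_of_mul_le_add_of_sum_le (a := fun k => (f^[k] ⁻¹' {x}).ncard)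
    (d := fun k => ∑ y ∈ T k, (r - (f ⁻¹' {y}).ncard)) (by simp)
    (monotone_nat_of_le_succ fun k => ?_) (fun k => ?_) ?_
  · rw [hcard, hT, Set.ncard_coe_finset, card_eq_sum_ones]
    exact sum_le_sum fun y _ => hfiber y
  · rw [hcard, hT, Set.ncard_coe_finset, ← sum_add_distrib, mul_comm, ← smul_eq_mul,
      ← sum_const]
    exact sum_le_sum fun y _ => by omega
  · rw [← sum_biUnion]
    · exact hdef _
    · intro j _ k _ hjk
      simpa [← Finset.disjoint_coe, ← hT] using
        Function.disjoint_preimage_iterate_singleton hper hjk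

theorem Polynomial.natDegree_wronskian_le {R : Type*} [CommRing R] (a b : R[X]) :
    (wronskian a b).natDegree ≤ a.natDegree + b.natDegree - 1 := by
  by_cases hw : wronskian a b = 0
  · simp [hw]
  · have := natDegree_wronskian_lt_add hw
    omega

theorem Polynomial.natDegree_le_card_roots_toFinset_add_natDegree_divRadical {k : Type*}
    [Field k] [IsAlgClosed k] (p : k[X]) :
    p.natDegree ≤ p.roots.toFinset.card + (divRadical p).natDegree := by
  rcases eq_or_ne p 0 with rfl | hp
  · simp
  set s : k[X] := ∏ z ∈ p.roots.toFinset, (X - C z)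
  have hs : s ≠ 0 := (monic_prod_of_monic _ _ fun z _ => monic_X_sub_C z).ne_zero
  have hps : p ∣ s ^ p.natDegree := by
    rw [IsAlgClosed.dvd_iff_roots_le_roots hp (pow_ne_zero _ hs), roots_pow, roots_prod_X_sub_C,
      Multiset.le_iff_count]
    intro z
    rw [Multiset.count_nsmul, Multiset.toFinset_val, Multiset.count_dedup]
    split_ifs with hz
    · exact (Multiset.count_le_card z _).trans ((card_roots' p).trans (by simp))
    · simp [Multiset.count_eq_zero_of_notMem hz]
  have hrad : (radical p).natDegree ≤ p.roots.toFinset.card :=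
    (natDegree_le_of_dvd ((exists_dvd_pow_iff_radical_dvd hp).mp ⟨_, hps⟩) hs).trans
      (natDegree_finsetProd_X_sub_C_eq_card _ _).le
  calc p.natDegree = (radical p).natDegree + (divRadical p).natDegree := by
        rw [← natDegree_mul radical_ne_zero (divRadical_ne_zero hp), radical_mul_divRadical]
    _ ≤ _ := Nat.add_le_add_right hrad _

-- The member of the pencil spanned by `a` and `b` that vanishes where `[a : b] = Q`.
def pencil {F M : Type*} [Field F] [AddCommGroup M] [Module F M] (Q : OnePoint F) (a b : M) : M :=
  Q.elim b fun α => a - α • b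

-- The point `[a : b]` of `ℙ¹`, with the junk value `[0 : 0] = ∞`.
noncomputable def ratioPoint {F : Type*} [Field F] (a b : F) : OnePoint F :=
  if b = 0 then ∞ else ↑(a / b)

section pencil

variable {F M N : Type*} [Field F] [AddCommGroup M] [Module F M] [AddCommGroup N] [Module F N]

@[simp] theorem pencil_infty (a b : M) : pencil (∞ : OnePoint F) a b = b := rfl

@[simp] theorem pencil_coe (α : F) (a b : M) : pencil (α : OnePoint F) a b = a - α • b := rfl

theorem LinearMap.map_pencil (f : M →ₗ[F] N) (Q : OnePoint F) (a b : M) :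
    f (pencil Q a b) = pencil Q (f a) (f b) := by
  cases Q <;> simp

theorem ratioPoint_eq_iff {a b : F} (hab : a ≠ 0 ∨ b ≠ 0) (Q : OnePoint F) :
    ratioPoint a b = Q ↔ pencil Q a b = 0 := by
  unfold ratioPoint
  cases Q with
  | infty => split_ifs with hb <;> simp [hb]
  | coe α =>
    split_ifs with hb
    · simp only [infty_ne_coe, pencil_coe, hb, smul_zero, sub_zero, false_iff]
      tauto
    · rw [coe_eq_coe, pencil_coe, smul_eq_mul, div_eq_iff hb, sub_eq_zero]

end pencil

section ratMap

variable {F : Type*} [Field F] {u v : F[X]}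

theorem eval_pencil (Q : OnePoint F) (z : F) :
    (pencil Q u v).eval z = pencil Q (u.eval z) (v.eval z) :=
  (leval z).map_pencil Q u v

theorem coeff_pencil (Q : OnePoint F) (n : ℕ) :
    (pencil Q u v).coeff n = pencil Q (u.coeff n) (v.coeff n) :=
  (lcoeff F n).map_pencil Q u v

theorem natDegree_pencil_le (Q : OnePoint F) :
    (pencil Q u v).natDegree ≤ max u.natDegree v.natDegree := by
  cases Q with
  | infty => exact le_max_right _ _
  | coe α =>
    exact (natDegree_sub_le _ _).trans (max_le_max le_rfl (natDegree_smul_le _ _))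

theorem ratMap_coe (z : F) : ratMap u v z = ratioPoint (u.eval z) (v.eval z) := rfl

theorem ratMap_infty (hv : v ≠ 0) :
    ratMap u v ∞ = ratioPoint (u.coeff (max u.natDegree v.natDegree))
      (v.coeff (max u.natDegree v.natDegree)) := by
  have hlc : v.coeff v.natDegree ≠ 0 := leadingCoeff_ne_zero.mpr hv
  change (if v.natDegree < u.natDegree then ∞ else if u.natDegree < v.natDegree then ↑(0 : F)
    else ((u.leadingCoeff / v.leadingCoeff : F) : OnePoint F)) = _
  unfold ratioPoint
  rcases lt_trichotomy u.natDegree v.natDegree with h | h | h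
  · rw [if_neg h.not_gt, if_pos h, max_eq_right h.le, if_neg hlc,
      coeff_eq_zero_of_natDegree_lt h, zero_div]
  · rw [if_neg h.not_gt, if_neg h.not_lt, leadingCoeff, leadingCoeff, h, max_self, if_neg hlc]
  · rw [if_pos h, max_eq_left h.le, if_pos (coeff_eq_zero_of_natDegree_lt h)]

theorem ratMap_coe_eq_iff (hcop : IsCoprime u v) (z : F) (Q : OnePoint F) :
    ratMap u v z = Q ↔ (pencil Q u v).IsRoot z := by
  rw [ratMap_coe, ratioPoint_eq_iff (by simpa using aeval_ne_zero_of_isCoprime hcop z), IsRoot,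
    eval_pencil]

theorem ratMap_infty_eq_iff (hv : v ≠ 0) (Q : OnePoint F) :
    ratMap u v ∞ = Q ↔ (pencil Q u v).coeff (max u.natDegree v.natDegree) = 0 := by
  rw [ratMap_infty hv, ratioPoint_eq_iff, coeff_pencil]
  rcases le_or_gt u.natDegree v.natDegree with h | h
  · right
    rw [max_eq_right h]
    exact leadingCoeff_ne_zero.mpr hv
  · left
    rw [max_eq_left h.le]
    exact leadingCoeff_ne_zero.mpr (ne_zero_of_natDegree_gt h)

theorem natDegree_pencil_of_ne (hv : v ≠ 0) {Q : OnePoint F} (hQ : ratMap u v ∞ ≠ Q) :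
    (pencil Q u v).natDegree = max u.natDegree v.natDegree :=
  (natDegree_pencil_le Q).antisymm
    (le_natDegree_of_ne_zero ((ratMap_infty_eq_iff hv Q).not.mp hQ))

theorem natDegree_pencil_ratMap_infty_lt (hv : v ≠ 0) (hD : 0 < max u.natDegree v.natDegree) :
    (pencil (ratMap u v ∞) u v).natDegree < max u.natDegree v.natDegree := by
  have := natDegree_le_pred (natDegree_pencil_le (u := u) (v := v) _)
    ((ratMap_infty_eq_iff hv _).mp rfl)
  omega

theorem pencil_ne_zero (hcop : IsCoprime u v) (hD : 0 < max u.natDegree v.natDegree)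
    (Q : OnePoint F) : pencil Q u v ≠ 0 := by
  intro h0
  cases Q with
  | infty =>
    rw [pencil_infty] at h0
    subst h0
    simp [natDegree_eq_zero_of_isUnit (isCoprime_zero_right.mp hcop)] at hD
  | coe α =>
    rw [pencil_coe, sub_eq_zero] at h0
    subst h0
    rw [smul_eq_C_mul] at hcop hD
    have hv := natDegree_eq_zero_of_isUnit (isCoprime_self.mp hcop.of_mul_left_right)
    have := natDegree_C_mul_le α v
    omega

theorem preimage_ratMap_singleton (hcop : IsCoprime u v) (hD : 0 < max u.natDegree v.natDegree)
    (Q : OnePoint F) :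
    ratMap u v ⁻¹' {Q} =
      (↑) '' (↑(pencil Q u v).roots.toFinset : Set F) ∪
        (if ratMap u v ∞ = Q then {∞} else ∅) := by
  ext P
  cases P with
  | infty => split_ifs with h <;> simp [h]
  | coe z =>
    simp [ratMap_coe_eq_iff hcop, pencil_ne_zero hcop hD]

theorem finite_preimage_ratMap_singleton (hcop : IsCoprime u v)
    (hD : 0 < max u.natDegree v.natDegree) (Q : OnePoint F) : (ratMap u v ⁻¹' {Q}).Finite := by
  rw [preimage_ratMap_singleton hcop hD]
  split_ifs <;> exact Set.toFinite _

theorem ncard_preimage_ratMap_singleton (hcop : IsCoprime u v)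
    (hD : 0 < max u.natDegree v.natDegree) (Q : OnePoint F) :
    (ratMap u v ⁻¹' {Q}).ncard =
      (pencil Q u v).roots.toFinset.card + if ratMap u v ∞ = Q then 1 else 0 := by
  rw [preimage_ratMap_singleton hcop hD]
  split_ifs
  · rw [Set.ncard_union_eq (by simp) (Set.toFinite _) (Set.toFinite _),
      Set.ncard_image_of_injective _ coe_injective, Set.ncard_coe_finset, Set.ncard_singleton]
  · rw [Set.union_empty, Set.ncard_image_of_injective _ coe_injective, Set.ncard_coe_finset,
      add_zero]

theorem wronskian_pencil_coe (α : F) :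
    wronskian (pencil (α : OnePoint F) u v) v = wronskian u v := by
  simp only [pencil_coe, wronskian, smul_eq_C_mul, derivative_sub, derivative_mul, derivative_C]
  ring

theorem divRadical_pencil_dvd_wronskian (Q : OnePoint F) :
    divRadical (pencil Q u v) ∣ wronskian u v := by
  cases Q with
  | infty => exact divRadical_dvd_wronskian_right u v
  | coe α => exact wronskian_pencil_coe (u := u) α ▸ divRadical_dvd_wronskian_left _ v

theorem natDegree_wronskian_le_natDegree_pencil_add (Q : OnePoint F) :
    (wronskian u v).natDegree ≤ (pencil Q u v).natDegree + max u.natDegree v.natDegree - 1 := by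
  cases Q with
  | infty =>
    have := natDegree_wronskian_le u v
    simp only [pencil_infty]
    omega
  | coe α =>
    have := natDegree_wronskian_le (pencil (α : OnePoint F) u v) v
    rw [wronskian_pencil_coe] at this
    omega

theorem wronskian_ne_zero [CharZero F] (hcop : IsCoprime u v)
    (hD : 0 < max u.natDegree v.natDegree) : wronskian u v ≠ 0 := by
  intro hw
  obtain ⟨hu', hv'⟩ := hcop.wronskian_eq_zero_iff.mp hw
  rw [derivative_eq_zero.mp hu', derivative_eq_zero.mp hv'] at hD
  exact hD.false

section IsAlgClosed

variable [IsAlgClosed F]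

theorem isCoprime_pencil (hcop : IsCoprime u v) {Q Q' : OnePoint F} (hQ : Q ≠ Q') :
    IsCoprime (pencil Q u v) (pencil Q' u v) := by
  refine (isCoprime_iff_aeval_ne_zero_of_isAlgClosed F F _ _).mpr fun z => ?_
  by_contra! h
  simp only [coe_aeval_eq_eval, ← IsRoot.def, ← ratMap_coe_eq_iff hcop] at h
  exact hQ (h.1.symm.trans h.2)

theorem ratMap_surjective (hcop : IsCoprime u v) (hD : 0 < max u.natDegree v.natDegree) :
    (ratMap u v).Surjective := by
  intro Q
  by_cases hQ : ratMap u v ∞ = Q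
  · exact ⟨∞, hQ⟩
  have hv : v ≠ 0 := pencil_ne_zero hcop hD ∞
  obtain ⟨z, hz⟩ := IsAlgClosed.exists_root (pencil Q u v) <| by
    rw [degree_eq_natDegree (pencil_ne_zero hcop hD Q), natDegree_pencil_of_ne hv hQ]
    exact_mod_cast hD.ne'
  exact ⟨z, (ratMap_coe_eq_iff hcop z Q).mpr hz⟩

theorem sum_natDegree_divRadical_pencil_le [CharZero F] (hcop : IsCoprime u v)
    (hD : 0 < max u.natDegree v.natDegree) (s : Finset (OnePoint F)) :
    ∑ Q ∈ s, (divRadical (pencil Q u v)).natDegree ≤ (wronskian u v).natDegree := by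
  rw [← natDegree_prod _ _ fun Q _ => divRadical_ne_zero (pencil_ne_zero hcop hD Q)]
  exact natDegree_le_of_dvd (Finset.prod_dvd_of_coprime
    (fun Q _ Q' _ hQ => (isCoprime_pencil hcop hQ).divRadical)
    fun Q _ => divRadical_pencil_dvd_wronskian Q) (wronskian_ne_zero hcop hD)

theorem sub_ncard_preimage_ratMap_le (hcop : IsCoprime u v)
    (hD : 0 < max u.natDegree v.natDegree) (Q : OnePoint F) :
    max u.natDegree v.natDegree - (ratMap u v ⁻¹' {Q}).ncard ≤
      (divRadical (pencil Q u v)).natDegree +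
        if ratMap u v ∞ = Q then max u.natDegree v.natDegree - 1 - (pencil Q u v).natDegree
        else 0 := by
  have := natDegree_le_card_roots_toFinset_add_natDegree_divRadical (pencil Q u v)
  rw [ncard_preimage_ratMap_singleton hcop hD]
  split_ifs with hQ
  · omega
  · have hv : v ≠ 0 := pencil_ne_zero hcop hD ∞
    have := natDegree_pencil_of_ne hv hQ
    omega

theorem sum_sub_ncard_preimage_ratMap_le [CharZero F] (hcop : IsCoprime u v)
    (hD : 0 < max u.natDegree v.natDegree) (s : Finset (OnePoint F)) :
    ∑ Q ∈ s, (max u.natDegree v.natDegree - (ratMap u v ⁻¹' {Q}).ncard) ≤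
      2 * (max u.natDegree v.natDegree - 1) := by
  have hv : v ≠ 0 := pencil_ne_zero hcop hD ∞
  have hW := natDegree_wronskian_le_natDegree_pencil_add (u := u) (v := v) (ratMap u v ∞)
  have hP := natDegree_pencil_ratMap_infty_lt hv hD
  set D := max u.natDegree v.natDegree
  set P := ratMap u v ∞
  calc ∑ Q ∈ s, (D - (ratMap u v ⁻¹' {Q}).ncard)
      ≤ ∑ Q ∈ s, ((divRadical (pencil Q u v)).natDegree +
          if P = Q then D - 1 - (pencil Q u v).natDegree else 0) :=
        Finset.sum_le_sum fun Q _ => sub_ncard_preimage_ratMap_le hcop hD Q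
    _ ≤ (wronskian u v).natDegree + (D - 1 - (pencil P u v).natDegree) := by
        rw [Finset.sum_add_distrib, Finset.sum_ite_eq]
        gcongr
        · exact sum_natDegree_divRadical_pencil_le hcop hD s
        · split_ifs <;> simp
    _ ≤ 2 * (D - 1) := by omega

end IsAlgClosed

end ratMap

/-- If `φ = u/v` is a rational map on `ℙ¹(ℂ)` of degree `r ≥ 2` such that `∞` is not a
periodic point of `φ`, then for all `n ≥ 2` the iterate `φⁿ` has at least `r^{n-2}`
distinct poles (preimages of `∞`). -/
theorem poles_of_iterate_ge_of_infty_not_periodic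
    (u v : Polynomial ℂ) (hcop : IsCoprime u v) (r : ℕ)
    (hr : r = max u.natDegree v.natDegree) (hr2 : 2 ≤ r)
    (hper : ∀ m : ℕ, 1 ≤ m → (ratMap u v)^[m] ∞ ≠ ∞) :
    ∀ n : ℕ, 2 ≤ n →
      r ^ (n - 2) ≤ ((ratMap u v)^[n] ⁻¹' ({∞} : Set (OnePoint ℂ))).ncard := by
  intro n _
  have hD : 0 < max u.natDegree v.natDegree := by omega
  subst hr
  exact pow_sub_le_ncard_preimage_iterate (finite_preimage_ratMap_singleton hcop hD)
    (ratMap_surjective hcop hD) (sum_sub_ncard_preimage_ratMap_le hcop hD) hper n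
end

section
/- Let φ be a rational map over ℂ of degree r ≥ 2 such that ∞ is a fixed point of φ but φ is not a polynomial (i.e. ∞ is not totally ramified). Then for all n ≥ 2, φⁿ has at least r^{n-2} + 2 distinct poles. -/
open Polynomial OnePoint Filter
open scoped Classical

private lemma eval_u_ne_zero {u v : Polynomial ℂ} (hcop : IsCoprime u v) {z : ℂ}
    (hv : v.eval z = 0) : u.eval z ≠ 0 := by
  obtain ⟨a, b, hab⟩ := hcop
  intro hu
  have h := congrArg (Polynomial.eval z) hab
  simp [hv, hu] at h

private lemma wronskian_ne_zero_s10 {u v : Polynomial ℂ} (hcop : IsCoprime u v)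
    (hu : 0 < u.natDegree) :
    derivative u * v - u * derivative v ≠ 0 := by
  intro h
  have h' : derivative u * v = u * derivative v := sub_eq_zero.mp h
  have hdvd : u ∣ derivative u * v := Dvd.intro _ h'.symm
  have hdu : u ∣ derivative u := hcop.dvd_of_dvd_mul_right hdvd
  rcases eq_or_ne (derivative u) 0 with h0 | h0
  · have := natDegree_eq_zero_of_derivative_eq_zero h0
    omega
  · have h1 := Polynomial.natDegree_le_of_dvd hdu h0
    have h2 := Polynomial.natDegree_derivative_le u
    omega

private lemma pow_sub_one_dvd_comb (q A B : Polynomial ℂ) (z : ℂ) :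
    (X - C z) ^ (q.rootMultiplicity z - 1) ∣ derivative q * A + q * B := by
  rcases eq_or_ne q 0 with rfl | hq
  · simp
  obtain ⟨s, hs⟩ := Polynomial.pow_rootMultiplicity_dvd q z
  set m := q.rootMultiplicity z with hm
  have h1 : (X - C z) ^ (m - 1) ∣ q :=
    dvd_trans (pow_dvd_pow _ (Nat.sub_le m 1)) (Polynomial.pow_rootMultiplicity_dvd q z)
  have h2 : (X - C z) ^ (m - 1) ∣ derivative q := by
    rw [hs, derivative_mul, derivative_pow]
    refine dvd_add ?_ ((pow_dvd_pow _ (Nat.sub_le m 1)).mul_right _)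
    exact ((dvd_mul_left _ _).mul_right _).mul_right _
  exact dvd_add (h2.mul_right _) (h1.mul_right _)

private lemma sum_count_le (M : Multiset ℂ) (s : Finset ℂ) :
    ∑ z ∈ s, M.count z ≤ Multiset.card M := by
  have h1 : ∑ z ∈ s, M.count z ≤ ∑ z ∈ s ∪ M.toFinset, M.count z :=
    Finset.sum_le_sum_of_subset Finset.subset_union_left
  have h2 : ∑ z ∈ s ∪ M.toFinset, M.count z = ∑ z ∈ M.toFinset, M.count z :=
    (Finset.sum_subset Finset.subset_union_right
      (fun x _ hx => Multiset.count_eq_zero_of_notMem (by simpa using hx))).symm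
  calc ∑ z ∈ s, M.count z ≤ ∑ z ∈ M.toFinset, M.count z := h1.trans_eq h2
    _ = Multiset.card M := Multiset.toFinset_sum_count_eq M

private lemma natDegree_le_card_add {W : Polynomial ℂ} (q : Polynomial ℂ) (hW : W ≠ 0)
    (h : ∀ z, (X - C z) ^ (q.rootMultiplicity z - 1) ∣ W) :
    q.natDegree ≤ q.roots.toFinset.card + ∑ z ∈ q.roots.toFinset, W.roots.count z := by
  have hsplit : q.roots.card = q.natDegree :=
    (Polynomial.splits_iff_card_roots).mp (IsAlgClosed.splits q)
  have hsum : q.natDegree = ∑ z ∈ q.roots.toFinset, q.roots.count z := by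
    rw [← hsplit, Multiset.toFinset_sum_count_eq]
  have hpt : ∀ z ∈ q.roots.toFinset, q.roots.count z ≤ 1 + W.roots.count z := by
    intro z _
    rw [Polynomial.count_roots, Polynomial.count_roots]
    have := (Polynomial.le_rootMultiplicity_iff hW).mpr (h z)
    omega
  calc q.natDegree = ∑ z ∈ q.roots.toFinset, q.roots.count z := hsum
    _ ≤ ∑ z ∈ q.roots.toFinset, (1 + W.roots.count z) := Finset.sum_le_sum hpt
    _ = q.roots.toFinset.card + ∑ z ∈ q.roots.toFinset, W.roots.count z := by
        rw [Finset.sum_add_distrib, Finset.sum_const, smul_eq_mul, mul_one]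

private lemma step_card {u v : Polynomial ℂ} (hcop : IsCoprime u v)
    (hlt : v.natDegree < u.natDegree) (hd : 1 ≤ v.natDegree) (T : Finset ℂ) :
    u.natDegree * T.card + 1 ≤
      (v.roots.toFinset ∪ T.biUnion (fun w => (u - C w * v).roots.toFinset)).card
        + u.natDegree := by
  have hv0 : v ≠ 0 := fun h => by simp [h] at hd
  have hdeg : ∀ w : ℂ, (u - C w * v).natDegree = u.natDegree := fun w =>
    natDegree_sub_eq_left_of_natDegree_lt ((natDegree_C_mul_le w v).trans_lt hlt)
  have hp0 : ∀ w : ℂ, u - C w * v ≠ 0 := by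
    intro w h
    have h2 := hdeg w
    rw [h, natDegree_zero] at h2
    omega
  have hroot : ∀ w z : ℂ, z ∈ (u - C w * v).roots.toFinset ↔ u.eval z = w * v.eval z := by
    intro w z
    simp [Multiset.mem_toFinset, mem_roots', hp0 w, IsRoot, sub_eq_zero]
  have hvz : ∀ w z : ℂ, u.eval z = w * v.eval z → v.eval z ≠ 0 := by
    intro w z h hv
    exact eval_u_ne_zero hcop hv (by rw [h, hv, mul_zero])
  have hdisj1 : Disjoint v.roots.toFinset (T.biUnion fun w => (u - C w * v).roots.toFinset) := by
    rw [Finset.disjoint_left]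
    intro z hz hz2
    obtain ⟨w, hw, hzw⟩ := Finset.mem_biUnion.mp hz2
    have hvzz : v.eval z = 0 := by simpa [Multiset.mem_toFinset, mem_roots', hv0] using hz
    exact hvz w z ((hroot w z).mp hzw) hvzz
  have hdisj2 : ∀ w ∈ T, ∀ w' ∈ T, w ≠ w' →
      Disjoint (u - C w * v).roots.toFinset (u - C w' * v).roots.toFinset := by
    intro w _ w' _ hne
    rw [Finset.disjoint_left]
    intro z hz hz'
    have h1 := (hroot w z).mp hz
    have h2 := (hroot w' z).mp hz'
    exact hne (mul_right_cancel₀ (hvz w z h1) (h1 ▸ h2 ▸ rfl))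
  set W : Polynomial ℂ := derivative u * v - u * derivative v with hWdef
  have hW : W ≠ 0 := wronskian_ne_zero_s10 hcop (by omega)
  have hWdeg : W.natDegree + 1 ≤ u.natDegree + v.natDegree := by
    have a1 : (derivative u * v).natDegree ≤ u.natDegree - 1 + v.natDegree :=
      natDegree_mul_le.trans (by have := natDegree_derivative_le u; omega)
    have a2 : (u * derivative v).natDegree ≤ u.natDegree + (v.natDegree - 1) :=
      natDegree_mul_le.trans (by have := natDegree_derivative_le v; omega)
    have a3 := natDegree_sub_le (derivative u * v) (u * derivative v)
    have a4 : max (derivative u * v).natDegree (u * derivative v).natDegree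
        ≤ u.natDegree + v.natDegree - 1 := Nat.max_le.mpr ⟨by omega, by omega⟩
    have h5 := a3.trans a4
    rw [← hWdef] at h5
    omega
  have hv_bound : v.natDegree ≤ v.roots.toFinset.card
      + ∑ z ∈ v.roots.toFinset, W.roots.count z := by
    refine natDegree_le_card_add v hW (fun z => ?_)
    have h := pow_sub_one_dvd_comb v (-u) (derivative u) z
    have he : derivative v * (-u) + v * derivative u = W := by rw [hWdef]; ring
    rwa [he] at h
  have hp_bound : ∀ w ∈ T, u.natDegree ≤ (u - C w * v).roots.toFinset.card
      + ∑ z ∈ (u - C w * v).roots.toFinset, W.roots.count z := by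
    intro w _
    have h := natDegree_le_card_add (W := W) (u - C w * v) hW (fun z => ?_)
    · rwa [hdeg w] at h
    · have h := pow_sub_one_dvd_comb (u - C w * v) v (-(derivative v)) z
      have he : derivative (u - C w * v) * v + (u - C w * v) * -derivative v = W := by
        rw [hWdef, derivative_sub, derivative_mul, derivative_C]; ring
      rwa [he] at h
  have hcardU : (v.roots.toFinset ∪ T.biUnion fun w => (u - C w * v).roots.toFinset).card
      = v.roots.toFinset.card + ∑ w ∈ T, (u - C w * v).roots.toFinset.card := by
    rw [Finset.card_union_of_disjoint hdisj1, Finset.card_biUnion hdisj2]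
  have hsumU : ∑ z ∈ (v.roots.toFinset ∪ T.biUnion fun w => (u - C w * v).roots.toFinset),
        W.roots.count z
      = (∑ z ∈ v.roots.toFinset, W.roots.count z)
        + ∑ w ∈ T, ∑ z ∈ (u - C w * v).roots.toFinset, W.roots.count z := by
    rw [Finset.sum_union hdisj1, Finset.sum_biUnion]
    intro w hw w' hw' hne
    exact hdisj2 w hw w' hw' hne
  have hbig : v.natDegree + u.natDegree * T.card
      ≤ (v.roots.toFinset ∪ T.biUnion fun w => (u - C w * v).roots.toFinset).card
        + ∑ z ∈ (v.roots.toFinset ∪ T.biUnion fun w => (u - C w * v).roots.toFinset),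
            W.roots.count z := by
    rw [hcardU, hsumU]
    have h1 : u.natDegree * T.card ≤ ∑ w ∈ T, ((u - C w * v).roots.toFinset.card
        + ∑ z ∈ (u - C w * v).roots.toFinset, W.roots.count z) := by
      calc u.natDegree * T.card = ∑ _w ∈ T, u.natDegree := by
            rw [Finset.sum_const, smul_eq_mul, mul_comm]
        _ ≤ _ := Finset.sum_le_sum hp_bound
    have h2 := Finset.sum_add_distrib (s := T)
      (f := fun w => (u - C w * v).roots.toFinset.card)
      (g := fun w => ∑ z ∈ (u - C w * v).roots.toFinset, W.roots.count z)
    omega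
  have hcount : ∑ z ∈ (v.roots.toFinset ∪ T.biUnion fun w => (u - C w * v).roots.toFinset),
      W.roots.count z ≤ W.natDegree :=
    (sum_count_le _ _).trans (card_roots' W)
  set k := u.natDegree * T.card
  omega

/-- The finite poles of the `n`-th iterate of the rational map `u/v`. -/
noncomputable def poleFinset (u v : Polynomial ℂ) : ℕ → Finset ℂ
  | 0 => ∅
  | n + 1 => v.roots.toFinset ∪ (poleFinset u v n).biUnion
      (fun w => (u - C w * v).roots.toFinset)

private lemma ratMap_coe_s10 (u v : Polynomial ℂ) (z : ℂ) :
    ratMap u v (z : OnePoint ℂ) =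
      if v.eval z = 0 then (∞ : OnePoint ℂ)
      else ((u.eval z / v.eval z : ℂ) : OnePoint ℂ) := rfl

private lemma iterate_infty_iff {u v : Polynomial ℂ} (_hcop : IsCoprime u v)
    (hv0 : v ≠ 0) (hlt : v.natDegree < u.natDegree) (hfix : ratMap u v ∞ = ∞) :
    ∀ (n : ℕ) (z : ℂ), ((ratMap u v)^[n] (z : OnePoint ℂ) = ∞ ↔ z ∈ poleFinset u v n) := by
  intro n
  induction n with
  | zero => intro z; simp [poleFinset, OnePoint.coe_ne_infty]
  | succ n ih =>
    intro z
    rw [Function.iterate_succ_apply, ratMap_coe_s10]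
    by_cases hvz : v.eval z = 0
    · simp only [hvz, if_pos]
      constructor
      · intro _
        simp [poleFinset, Multiset.mem_toFinset, mem_roots', hv0, IsRoot, hvz]
      · intro _
        rw [Function.iterate_fixed hfix]
    · rw [if_neg hvz, ih]
      constructor
      · intro h
        simp only [poleFinset, Finset.mem_union, Finset.mem_biUnion]
        refine Or.inr ⟨u.eval z / v.eval z, h, ?_⟩
        have hp0 : u - C (u.eval z / v.eval z) * v ≠ 0 := by
          intro h0
          have he : u = C (u.eval z / v.eval z) * v := by rwa [sub_eq_zero] at h0
          have := natDegree_C_mul_le (u.eval z / v.eval z) v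
          rw [← he] at this
          omega
        rw [Multiset.mem_toFinset, mem_roots']
        refine ⟨hp0, ?_⟩
        simp [IsRoot, div_mul_cancel₀, hvz]
      · intro h
        simp only [poleFinset, Finset.mem_union, Finset.mem_biUnion] at h
        rcases h with h | ⟨w, hw, hz⟩
        · exact absurd (by simpa [Multiset.mem_toFinset, mem_roots', hv0] using h) hvz
        · rw [Multiset.mem_toFinset, mem_roots'] at hz
          have h1 : u.eval z = w * v.eval z := by
            have h2 := hz.2
            simp only [IsRoot, eval_sub, eval_mul, eval_C, sub_eq_zero] at h2
            exact h2
          have h3 : u.eval z / v.eval z = w := by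
            rw [h1, mul_div_assoc, div_self hvz, mul_one]
          rwa [h3]

/-- If `φ = u/v` is a rational map on `ℙ¹(ℂ)` of degree `r ≥ 2` such that `∞` is a fixed
point of `φ` but `φ` is not a polynomial (i.e. `φ⁻¹(∞) ≠ {∞}`), then for all `n ≥ 2` the
iterate `φⁿ` has at least `r^{n-2} + 2` distinct poles. -/
theorem poles_of_iterate_ge_of_infty_fixed_not_totally_ramified
    (u v : Polynomial ℂ) (hcop : IsCoprime u v) (r : ℕ)
    (hr : r = max u.natDegree v.natDegree) (hr2 : 2 ≤ r)
    (hfix : ratMap u v ∞ = ∞)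
    (hnotpoly : ratMap u v ⁻¹' ({∞} : Set (OnePoint ℂ)) ≠ {∞}) :
    ∀ n : ℕ, 2 ≤ n →
      r ^ (n - 2) + 2 ≤ ((ratMap u v)^[n] ⁻¹' ({∞} : Set (OnePoint ℂ))).ncard := by
  -- ∞ fixed forces deg v < deg u
  have hinfty : ratMap u v ∞ =
      (if v.natDegree < u.natDegree then (∞ : OnePoint ℂ)
       else if u.natDegree < v.natDegree then ((0 : ℂ) : OnePoint ℂ)
       else ((u.leadingCoeff / v.leadingCoeff : ℂ) : OnePoint ℂ)) := rfl
  have hlt : v.natDegree < u.natDegree := by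
    by_contra hn
    rw [hinfty] at hfix
    rw [if_neg hn] at hfix
    split_ifs at hfix <;> exact OnePoint.coe_ne_infty _ hfix
  have hrr : r = u.natDegree := by rw [hr, max_eq_left hlt.le]
  -- v has a root
  have hz0 : ∃ z : ℂ, v.eval z = 0 := by
    by_contra hno
    push_neg at hno
    apply hnotpoly
    ext P
    induction P using OnePoint.rec with
    | infty => simp [hfix]
    | coe z =>
      simp only [Set.mem_preimage, Set.mem_singleton_iff, ratMap_coe_s10, if_neg (hno z)]
      exact ⟨fun h => absurd h (OnePoint.coe_ne_infty _), fun h => absurd h (OnePoint.coe_ne_infty _)⟩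
  obtain ⟨z₀, hz₀⟩ := hz0
  have hv0 : v ≠ 0 := by
    intro h
    rw [h] at hcop
    have := Polynomial.natDegree_eq_zero_of_isUnit (isCoprime_zero_right.mp hcop)
    omega
  have hd : 1 ≤ v.natDegree := by
    by_contra hdd
    push_neg at hdd
    have h0 : v.natDegree = 0 := by omega
    have := Polynomial.eq_C_of_natDegree_eq_zero h0
    rw [this] at hz₀ hv0
    rw [eval_C] at hz₀
    rw [hz₀] at hv0
    simp at hv0
  -- preimage description
  have hset : ∀ n : ℕ, (ratMap u v)^[n] ⁻¹' ({∞} : Set (OnePoint ℂ))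
      = insert (∞ : OnePoint ℂ)
          ((fun z : ℂ => (z : OnePoint ℂ)) '' (poleFinset u v n : Set ℂ)) := by
    intro n
    ext P
    induction P using OnePoint.rec with
    | infty =>
      simp [Function.iterate_fixed hfix n]
    | coe z =>
      simp only [Set.mem_preimage, Set.mem_singleton_iff, Set.mem_insert_iff,
        Set.mem_image, Finset.mem_coe]
      rw [iterate_infty_iff hcop hv0 hlt hfix n z]
      constructor
      · intro h; exact Or.inr ⟨z, h, rfl⟩
      · rintro (h | ⟨w, hw, hwz⟩)
        · exact absurd h (OnePoint.coe_ne_infty z)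
        · rwa [← OnePoint.coe_eq_coe.mp hwz]
  have hncard : ∀ n : ℕ, ((ratMap u v)^[n] ⁻¹' ({∞} : Set (OnePoint ℂ))).ncard
      = (poleFinset u v n).card + 1 := by
    intro n
    rw [hset n]
    have hfin : ((fun z : ℂ => (z : OnePoint ℂ)) '' (poleFinset u v n : Set ℂ)).Finite :=
      (Finset.finite_toSet _).image _
    rw [Set.ncard_insert_of_notMem (by
        rintro ⟨z, _, hz⟩
        exact OnePoint.coe_ne_infty z hz) hfin]
    rw [Set.ncard_image_of_injective _ OnePoint.coe_injective, Set.ncard_coe_finset]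
  -- main induction: card (poleFinset n) ≥ r^(n-2) + 1 for n ≥ 2
  have hmain : ∀ n : ℕ, 2 ≤ n → r ^ (n - 2) + 1 ≤ (poleFinset u v n).card := by
    intro n hn
    induction n, hn using Nat.le_induction with
    | base =>
      -- card (poleFinset 2) ≥ 2
      have h1eq : poleFinset u v 1 = v.roots.toFinset ∪ (∅ : Finset ℂ).biUnion
          (fun w => (u - C w * v).roots.toFinset) := rfl
      have h2eq : poleFinset u v 2 = v.roots.toFinset ∪ (poleFinset u v 1).biUnion
          (fun w => (u - C w * v).roots.toFinset) := rfl
      have hz₀v : z₀ ∈ v.roots.toFinset := by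
        simp [Multiset.mem_toFinset, mem_roots', hv0, IsRoot, hz₀]
      have hz₀mem1 : z₀ ∈ poleFinset u v 1 := by
        rw [h1eq]; exact Finset.mem_union_left _ hz₀v
      have hdegp : (u - C z₀ * v).natDegree = u.natDegree :=
        natDegree_sub_eq_left_of_natDegree_lt ((natDegree_C_mul_le z₀ v).trans_lt hlt)
      obtain ⟨z₁, hz₁⟩ := Complex.exists_root (f := u - C z₀ * v)
        (natDegree_pos_iff_degree_pos.mp (by omega))
      have hp0 : u - C z₀ * v ≠ 0 := by
        intro h
        rw [h, natDegree_zero] at hdegp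
        omega
      have hvz₁ : v.eval z₁ ≠ 0 := by
        intro hv1
        have h2 : u.eval z₁ = 0 := by
          have := hz₁
          simp only [IsRoot, eval_sub, eval_mul, eval_C, sub_eq_zero] at this
          rw [this, hv1, mul_zero]
        exact eval_u_ne_zero hcop hv1 h2
      have hne : z₀ ≠ z₁ := fun h => hvz₁ (h ▸ hz₀)
      have hz₀mem : z₀ ∈ poleFinset u v 2 := by
        rw [h2eq]; exact Finset.mem_union_left _ hz₀v
      have hz₁mem : z₁ ∈ poleFinset u v 2 := by
        rw [h2eq]
        exact Finset.mem_union_right _ (Finset.mem_biUnion.mpr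
          ⟨z₀, hz₀mem1, by rw [Multiset.mem_toFinset, mem_roots']; exact ⟨hp0, hz₁⟩⟩)
      have hsub : ({z₀, z₁} : Finset ℂ) ⊆ poleFinset u v 2 := by
        intro x hx
        rcases Finset.mem_insert.mp hx with h | h
        · rwa [h]
        · rw [Finset.mem_singleton.mp h]; exact hz₁mem
      have := Finset.card_le_card hsub
      rw [Finset.card_pair hne] at this
      simpa using this
    | succ n hn ih =>
      have hstep := step_card hcop hlt hd (poleFinset u v n)
      rw [← hrr] at hstep
      have h1 : r * (r ^ (n - 2) + 1) ≤ r * (poleFinset u v n).card :=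
        Nat.mul_le_mul_left r ih
      have hpow : r ^ (n + 1 - 2) = r ^ (n - 2) * r := by
        rw [show n + 1 - 2 = (n - 2) + 1 by omega, pow_succ]
      rw [hpow]
      have h3 : r * (r ^ (n - 2) + 1) = r ^ (n - 2) * r + r := by ring
      rw [h3] at h1
      have hT : poleFinset u v (n + 1) = v.roots.toFinset ∪ (poleFinset u v n).biUnion
          (fun w => (u - C w * v).roots.toFinset) := rfl
      rw [hT]
      set a := r ^ (n - 2) * r
      set b := r * (poleFinset u v n).card
      omega
  intro n hn
  rw [hncard n]
  have := hmain n hn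
  omega
end
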